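/- Let E and E' be normed spaces with E' complete, and let φ : E × E → ℝ≥0 satisfy Σ_{i=0}^∞ 2^{−i} φ(2^i a, 2^i b) < ∞ for all a, b. If f : E → E' satisfies ‖f(a+b) − f(a) − f(b)‖ ≤ φ(a,b) for all a, b, then the sequence (2^{−n} f(2^n a))_n is Cauchy for each a, its limit d(a) defines an additive map d : E → E', and ‖f(a) − d(a)‖ ≤ (1/2) Σ_{i=0}^∞ 2^{−i} φ(2^i a, 2^i a) for all a. Moreover d is the unique additive map satisfying this bound. -/

import Mathlib

/-!
Hyers' direct method. With `g n a = 2⁻ⁿ f (2ⁿ a)` one has `g (n + 1) a = ½ g n (a + a)`, so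
consecutive terms differ by half the additivity defect of `g n` at `(a, a)`, which is at most
`½ 2⁻ⁿ φ (2ⁿ a, 2ⁿ a)`. Summability makes `g n a` Cauchy and telescoping bounds `f - d`; the
defect of `g n` at `(a, b)` tends to `0`, so the limit is additive. For an additive `d'`,
`g n a - d' a = 2⁻ⁿ (f - d') (2ⁿ a)`, which the assumed bound makes a tail of a convergent series,
so `g n a → d' a` as well.
-/

open Filter Topology

section HyersUlam

variable {E E' : Type*} [NormedAddCommGroup E] [NormedSpace ℝ E]
  [NormedAddCommGroup E'] [NormedSpace ℝ E']

noncomputable def hyersSeq (f : E → E') (a : E) (n : ℕ) : E' :=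
  ((2 : ℝ) ^ n)⁻¹ • f ((2 : ℝ) ^ n • a)

noncomputable def hyersTerm (φ : E → E → ℝ) (a b : E) (i : ℕ) : ℝ :=
  ((2 : ℝ) ^ i)⁻¹ * φ ((2 : ℝ) ^ i • a) ((2 : ℝ) ^ i • b)

theorem hyersTerm_two_pow_smul (φ : E → E → ℝ) (a b : E) (n i : ℕ) :
    hyersTerm φ ((2 : ℝ) ^ n • a) ((2 : ℝ) ^ n • b) i = 2 ^ n * hyersTerm φ a b (i + n) := by
  simp only [hyersTerm, smul_smul, pow_add, mul_inv]
  field_simp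

theorem hyersSeq_zero (f : E → E') (a : E) : hyersSeq f a 0 = f a := by
  simp [hyersSeq]

theorem hyersSeq_succ (f : E → E') (a : E) (n : ℕ) :
    hyersSeq f a (n + 1) = (2 : ℝ)⁻¹ • hyersSeq f (a + a) n := by
  rw [hyersSeq, hyersSeq, ← two_smul ℝ a, smul_smul, smul_smul, ← pow_succ, pow_succ, mul_inv,
    mul_comm]

theorem hyersSeq_sub (f g : E → E') (a : E) (n : ℕ) :
    hyersSeq f a n - hyersSeq g a n = hyersSeq (f - g) a n :=
  (smul_sub _ _ _).symm

theorem hyersSeq_of_map_add {d : E → E'} (hd : ∀ a b, d (a + b) = d a + d b) (a : E) (n : ℕ) :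
    hyersSeq d a n = d a := by
  have hd_nsmul := map_natCast_smul (AddMonoidHom.mk' d hd) ℝ ℝ (2 ^ n) a
  simp only [AddMonoidHom.mk'_apply, Nat.cast_pow, Nat.cast_ofNat] at hd_nsmul
  rw [hyersSeq, hd_nsmul, smul_smul, inv_mul_cancel₀ (by positivity), one_smul]

theorem norm_hyersSeq_add_sub_sub_le {φ : E → E → ℝ} {f : E → E'}
    (hf : ∀ a b, ‖f (a + b) - f a - f b‖ ≤ φ a b) (a b : E) (n : ℕ) :
    ‖hyersSeq f (a + b) n - hyersSeq f a n - hyersSeq f b n‖ ≤ hyersTerm φ a b n := by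
  simp only [hyersSeq, hyersTerm, smul_add, ← smul_sub, norm_smul, norm_inv, norm_pow,
    Real.norm_two]
  exact mul_le_mul_of_nonneg_left (hf _ _) (by positivity)

theorem dist_hyersSeq_succ_le {φ : E → E → ℝ} {f : E → E'}
    (hf : ∀ a b, ‖f (a + b) - f a - f b‖ ≤ φ a b) (a : E) (n : ℕ) :
    dist (hyersSeq f a n) (hyersSeq f a (n + 1)) ≤ 2⁻¹ * hyersTerm φ a a n := by
  have hdiff : hyersSeq f a (n + 1) - hyersSeq f a n =
      (2 : ℝ)⁻¹ • (hyersSeq f (a + a) n - hyersSeq f a n - hyersSeq f a n) := by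
    rw [hyersSeq_succ]
    module
  rw [dist_comm, dist_eq_norm, hdiff, norm_smul, norm_inv, Real.norm_two]
  exact mul_le_mul_of_nonneg_left (norm_hyersSeq_add_sub_sub_le hf a a n) (by positivity)

theorem cauchySeq_hyersSeq {φ : E → E → ℝ} {f : E → E'}
    (hf : ∀ a b, ‖f (a + b) - f a - f b‖ ≤ φ a b) {a : E}
    (hsum : Summable (hyersTerm φ a a)) :
    CauchySeq (hyersSeq f a) :=
  cauchySeq_of_dist_le_of_summable _ (dist_hyersSeq_succ_le hf a) (hsum.mul_left _)

theorem norm_sub_le_of_tendsto_hyersSeq {φ : E → E → ℝ} {f : E → E'}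
    (hf : ∀ a b, ‖f (a + b) - f a - f b‖ ≤ φ a b) {a : E} {d : E'}
    (hsum : Summable (hyersTerm φ a a))
    (hd : Tendsto (hyersSeq f a) atTop (𝓝 d)) :
    ‖f a - d‖ ≤ 2⁻¹ * ∑' i, hyersTerm φ a a i := by
  have htel := dist_le_tsum_of_dist_le_of_tendsto₀ _ (dist_hyersSeq_succ_le hf a)
    (hsum.mul_left _) hd
  rwa [hyersSeq_zero, dist_eq_norm, tsum_mul_left] at htel

theorem map_add_of_tendsto_hyersSeq {φ : E → E → ℝ} {f : E → E'}
    (hf : ∀ a b, ‖f (a + b) - f a - f b‖ ≤ φ a b) {d : E → E'} {a b : E}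
    (hsum : Summable (hyersTerm φ a b))
    (hd : ∀ a, Tendsto (hyersSeq f a) atTop (𝓝 (d a))) :
    d (a + b) = d a + d b := by
  have hdefect : Tendsto (fun n => hyersSeq f (a + b) n - hyersSeq f a n - hyersSeq f b n)
      atTop (𝓝 0) :=
    squeeze_zero_norm (norm_hyersSeq_add_sub_sub_le hf a b) hsum.tendsto_atTop_zero
  have hlim := tendsto_nhds_unique (((hd (a + b)).sub (hd a)).sub (hd b)) hdefect
  rw [sub_sub, sub_eq_zero] at hlim
  exact hlim

theorem norm_hyersSeq_le {φ : E → E → ℝ} {g : E → E'}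
    (hg : ∀ a, ‖g a‖ ≤ 2⁻¹ * ∑' i, hyersTerm φ a a i) (a : E) (n : ℕ) :
    ‖hyersSeq g a n‖ ≤ 2⁻¹ * ∑' i, hyersTerm φ a a (i + n) := by
  have hpow : (0 : ℝ) < 2 ^ n := by positivity
  calc ‖hyersSeq g a n‖ = ((2 : ℝ) ^ n)⁻¹ * ‖g ((2 : ℝ) ^ n • a)‖ := by
        rw [hyersSeq, norm_smul, norm_inv, norm_pow, Real.norm_two]
    _ ≤ ((2 : ℝ) ^ n)⁻¹ * (2⁻¹ * ∑' i, 2 ^ n * hyersTerm φ a a (i + n)) := by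
        simp only [← hyersTerm_two_pow_smul]
        exact mul_le_mul_of_nonneg_left (hg _) (by positivity)
    _ = 2⁻¹ * ∑' i, hyersTerm φ a a (i + n) := by
        rw [tsum_mul_left]
        field_simp

theorem tendsto_hyersSeq_of_map_add {φ : E → E → ℝ} {f d : E → E'}
    (hd : ∀ a b, d (a + b) = d a + d b)
    (hfd : ∀ a, ‖f a - d a‖ ≤ 2⁻¹ * ∑' i, hyersTerm φ a a i) (a : E) :
    Tendsto (hyersSeq f a) atTop (𝓝 (d a)) := by
  rw [tendsto_iff_norm_sub_tendsto_zero]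
  have htail := (tendsto_sum_nat_add (hyersTerm φ a a)).const_mul (2⁻¹ : ℝ)
  rw [mul_zero] at htail
  refine squeeze_zero (fun _ => norm_nonneg _) (fun n => ?_) htail
  rw [← hyersSeq_of_map_add hd a n, hyersSeq_sub]
  exact norm_hyersSeq_le hfd a n

end HyersUlam

theorem stmt_general {E E' : Type*} [NormedAddCommGroup E] [NormedSpace ℝ E]
    [NormedAddCommGroup E'] [NormedSpace ℝ E'] [CompleteSpace E']
    (φ : E → E → ℝ)
    (hsum : ∀ a b : E, Summable fun i : ℕ =>
      ((2 : ℝ) ^ i)⁻¹ * φ ((2 : ℝ) ^ i • a) ((2 : ℝ) ^ i • b))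
    (f : E → E') (hf : ∀ a b : E, ‖f (a + b) - f a - f b‖ ≤ φ a b) :
    (∀ a : E, CauchySeq fun n : ℕ => ((2 : ℝ) ^ n)⁻¹ • f ((2 : ℝ) ^ n • a)) ∧
    ∃ d : E → E',
      (∀ a : E, Tendsto (fun n : ℕ => ((2 : ℝ) ^ n)⁻¹ • f ((2 : ℝ) ^ n • a)) atTop (𝓝 (d a))) ∧
      (∀ a b : E, d (a + b) = d a + d b) ∧
      (∀ a : E, ‖f a - d a‖ ≤
        2⁻¹ * ∑' i : ℕ, ((2 : ℝ) ^ i)⁻¹ * φ ((2 : ℝ) ^ i • a) ((2 : ℝ) ^ i • a)) ∧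
      ∀ d' : E → E', (∀ a b : E, d' (a + b) = d' a + d' b) →
        (∀ a : E, ‖f a - d' a‖ ≤
          2⁻¹ * ∑' i : ℕ, ((2 : ℝ) ^ i)⁻¹ * φ ((2 : ℝ) ^ i • a) ((2 : ℝ) ^ i • a)) → d' = d := by
  have hcauchy (a : E) : CauchySeq (hyersSeq f a) := cauchySeq_hyersSeq hf (hsum a a)
  choose d hd using fun a => cauchySeq_tendsto_of_complete (hcauchy a)
  refine ⟨hcauchy, d, hd, fun a b => map_add_of_tendsto_hyersSeq hf (hsum a b) hd,
    fun a => norm_sub_le_of_tendsto_hyersSeq hf (hsum a a) (hd a), ?_⟩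
  intro d' hd' hfd'
  funext a
  exact tendsto_nhds_unique (tendsto_hyersSeq_of_map_add hd' hfd' a) (hd a)

theorem stmt {E E' : Type*} [NormedAddCommGroup E] [NormedSpace ℝ E]
    [NormedAddCommGroup E'] [NormedSpace ℝ E'] [CompleteSpace E']
    (φ : E → E → ℝ) (hφ0 : ∀ a b : E, 0 ≤ φ a b)
    (hsum : ∀ a b : E, Summable fun i : ℕ =>
      ((2 : ℝ) ^ i)⁻¹ * φ ((2 : ℝ) ^ i • a) ((2 : ℝ) ^ i • b))
    (f : E → E') (hf : ∀ a b : E, ‖f (a + b) - f a - f b‖ ≤ φ a b) :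
    (∀ a : E, CauchySeq fun n : ℕ => ((2 : ℝ) ^ n)⁻¹ • f ((2 : ℝ) ^ n • a)) ∧
    ∃ d : E → E',
      (∀ a : E, Tendsto (fun n : ℕ => ((2 : ℝ) ^ n)⁻¹ • f ((2 : ℝ) ^ n • a)) atTop (𝓝 (d a))) ∧
      (∀ a b : E, d (a + b) = d a + d b) ∧
      (∀ a : E, ‖f a - d a‖ ≤
        2⁻¹ * ∑' i : ℕ, ((2 : ℝ) ^ i)⁻¹ * φ ((2 : ℝ) ^ i • a) ((2 : ℝ) ^ i • a)) ∧
      ∀ d' : E → E', (∀ a b : E, d' (a + b) = d' a + d' b) →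
        (∀ a : E, ‖f a - d' a‖ ≤
          2⁻¹ * ∑' i : ℕ, ((2 : ℝ) ^ i)⁻¹ * φ ((2 : ℝ) ^ i • a) ((2 : ℝ) ^ i • a)) → d' = d :=
  stmt_general φ hsum f hf
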